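/- arXiv:1811.09552 — 6 statements merged into one kernel-verified Lean document; each statement's English description precedes it below -/
import Mathlib

section
/- (Coupling lower bound) Consider a Moran process with three strategies, with Z^+_{ij} = p^{AB}_{ij} + p^{AC}_{ij} and Z^-_{ij} = p^{BA}_{ij} + p^{CA}_{ij}. Suppose there is a birth-death process on {0,...,N} with birth probabilities a_i and death probabilities b_i such that for all (i,j) ∈ Λ_N: a_i ≤ Z^+_{ij}, b_i ≥ Z^-_{ij}, and a_{i-1} ≤ 1 - Z^-_{ij}. Then the fixation probability α_{ij} of strategy A satisfies α_{ij} ≥ π_i for all (i,j) ∈ Λ_N, where π_i is the fixation probability at N of the birth-death process. -/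
noncomputable section

/-- Total fitness `S_{ij} = i f_{ij} + j g_{ij} + (N-i-j) h_{ij}`. -/
def Sfit (N : ℕ) (f g h : ℕ → ℕ → ℝ) (i j : ℕ) : ℝ :=
  (i : ℝ) * f i j + (j : ℝ) * g i j + ((N - i - j : ℕ) : ℝ) * h i j

/-- Probability of drawing an A for reproduction and a B for death. -/
def pAB (N : ℕ) (f g h : ℕ → ℕ → ℝ) (i j : ℕ) : ℝ :=
  ((i : ℝ) * f i j / Sfit N f g h i j) * ((j : ℝ) / (N : ℝ))

def pBA (N : ℕ) (f g h : ℕ → ℕ → ℝ) (i j : ℕ) : ℝ :=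
  ((j : ℝ) * g i j / Sfit N f g h i j) * ((i : ℝ) / (N : ℝ))

def pAC (N : ℕ) (f g h : ℕ → ℕ → ℝ) (i j : ℕ) : ℝ :=
  ((i : ℝ) * f i j / Sfit N f g h i j) * (((N - i - j : ℕ) : ℝ) / (N : ℝ))

def pCA (N : ℕ) (f g h : ℕ → ℕ → ℝ) (i j : ℕ) : ℝ :=
  (((N - i - j : ℕ) : ℝ) * h i j / Sfit N f g h i j) * ((i : ℝ) / (N : ℝ))

def pBC (N : ℕ) (f g h : ℕ → ℕ → ℝ) (i j : ℕ) : ℝ :=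
  ((j : ℝ) * g i j / Sfit N f g h i j) * (((N - i - j : ℕ) : ℝ) / (N : ℝ))

def pCB (N : ℕ) (f g h : ℕ → ℕ → ℝ) (i j : ℕ) : ℝ :=
  (((N - i - j : ℕ) : ℝ) * h i j / Sfit N f g h i j) * ((j : ℝ) / (N : ℝ))

/-- `Z⁺_{ij}`: probability that the number of A individuals increases. -/
def Zp (N : ℕ) (f g h : ℕ → ℕ → ℝ) (i j : ℕ) : ℝ :=
  pAB N f g h i j + pAC N f g h i j

/-- `Z⁻_{ij}`: probability that the number of A individuals decreases. -/
def Zm (N : ℕ) (f g h : ℕ → ℕ → ℝ) (i j : ℕ) : ℝ :=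
  pBA N f g h i j + pCA N f g h i j

/-- `α` is the fixation-probability function of the Moran process with three
strategies, with boundary values `vA, vB, vC` at the absorbing states
`(N,0)`, `(0,N)`, `(0,0)` and harmonic at all non-absorbing states. -/
def IsMoranFix (N : ℕ) (f g h : ℕ → ℕ → ℝ) (vA vB vC : ℝ) (α : ℕ × ℕ → ℝ) : Prop :=
  α (N, 0) = vA ∧ α (0, N) = vB ∧ α (0, 0) = vC ∧
  ∀ i j : ℕ, i + j ≤ N → ¬(i = N ∨ j = N ∨ (i = 0 ∧ j = 0)) →
    α (i, j) =
      pAB N f g h i j * α (i + 1, j - 1) + pBA N f g h i j * α (i - 1, j + 1) +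
      pAC N f g h i j * α (i + 1, j) + pCA N f g h i j * α (i - 1, j) +
      pBC N f g h i j * α (i, j + 1) + pCB N f g h i j * α (i, j - 1) +
      (1 - (pAB N f g h i j + pBA N f g h i j + pAC N f g h i j +
            pCA N f g h i j + pBC N f g h i j + pCB N f g h i j)) * α (i, j)

/-- `π` is the fixation-probability function at state `N` of a birth-death
process with birth probabilities `a` and death probabilities `b`. -/
def IsBDFix (N : ℕ) (a b : ℕ → ℝ) (π : ℕ → ℝ) : Prop :=
  π 0 = 0 ∧ π N = 1 ∧ ∀ i, 0 < i → i < N →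
    π i = a i * π (i + 1) + b i * π (i - 1) + (1 - a i - b i) * π i

end


section Aux

/-- Sign propagation along a one-dimensional chain recurrence. -/
lemma chain_sign (N : ℕ) (u p q : ℕ → ℝ)
    (hp : ∀ i, 0 < i → i < N → 0 < p i)
    (hq : ∀ i, 0 < i → i < N → 0 ≤ q i)
    (hrec : ∀ i, 0 < i → i < N → p i * u i = q i * u (i - 1))
    (h0 : 0 ≤ u 0) :
    ∀ i, i < N → 0 ≤ u i := by
  intro i
  induction i with
  | zero => intro _; exact h0
  | succ n ih =>
    intro hi
    have hn := ih (by omega)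
    have h1 := hrec (n + 1) (by omega) hi
    have h2 := hp (n + 1) (by omega) hi
    have h3 := hq (n + 1) (by omega) hi
    simp only [Nat.add_sub_cancel] at h1
    by_contra hcon
    push_neg at hcon
    nlinarith [mul_nonneg h3 hn, mul_pos h2 (neg_pos.mpr hcon)]

/-- Accumulation of monotone steps starting at `s`. -/
lemma accum' (v : ℕ → ℝ) (s n : ℕ)
    (hstep : ∀ i, s ≤ i → i < n → v i ≤ v (i + 1)) :
    ∀ k, s ≤ k → k ≤ n → v s ≤ v k := by
  intro k
  induction k with
  | zero => intro hs _; have : s = 0 := Nat.le_zero.mp hs; rw [this]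
  | succ m ih =>
    intro hs hk
    rcases Nat.eq_or_lt_of_le hs with h | h
    · rw [h]
    · exact le_trans (ih (by omega) (by omega)) (hstep m (by omega) (by omega))

lemma Sfit_pos (N : ℕ) (hN : 1 ≤ N) (f g h : ℕ → ℕ → ℝ) (i j : ℕ) (hij : i + j ≤ N)
    (hf : 0 < f i j) (hg : 0 < g i j) (hh : 0 < h i j) : 0 < Sfit N f g h i j := by
  unfold Sfit
  have t1 : 0 ≤ (i : ℝ) * f i j := mul_nonneg (Nat.cast_nonneg i) hf.le
  have t2 : 0 ≤ (j : ℝ) * g i j := mul_nonneg (Nat.cast_nonneg j) hg.le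
  have t3 : 0 ≤ ((N - i - j : ℕ) : ℝ) * h i j := mul_nonneg (Nat.cast_nonneg _) hh.le
  have : 0 < i ∨ 0 < j ∨ 0 < N - i - j := by omega
  rcases this with hc | hc | hc
  · have : 0 < (i : ℝ) * f i j := mul_pos (by exact_mod_cast hc) hf
    linarith
  · have : 0 < (j : ℝ) * g i j := mul_pos (by exact_mod_cast hc) hg
    linarith
  · have : 0 < ((N - i - j : ℕ) : ℝ) * h i j := mul_pos (by exact_mod_cast hc) hh
    linarith

end Aux

set_option maxHeartbeats 1000000 in
/-- Coupling lower bound: if a birth-death comparison process satisfies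
`a_i ≤ Z⁺_{ij}`, `b_i ≥ Z⁻_{ij}` and `a_{i-1} ≤ 1 - Z⁻_{ij}` for all
`(i,j) ∈ Λ_N`, then the fixation probability of strategy A in the Moran
process with three strategies dominates the fixation probability at `N` of
the birth-death process: `α_{ij} ≥ π_i`. -/
theorem coupling_lower_bound (N : ℕ) (hN : 1 ≤ N) (f g h : ℕ → ℕ → ℝ)
    (hf : ∀ i j : ℕ, i + j ≤ N → 0 < f i j)
    (hg : ∀ i j : ℕ, i + j ≤ N → 0 < g i j)
    (hh : ∀ i j : ℕ, i + j ≤ N → 0 < h i j)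
    (α : ℕ × ℕ → ℝ) (hα : IsMoranFix N f g h 1 0 0 α)
    (a b : ℕ → ℝ) (ha0 : a 0 = 0) (hbN : b N = 0)
    (hapos : ∀ i, 0 < i → i < N → 0 < a i)
    (hbpos : ∀ i, 0 < i → i < N → 0 < b i)
    (hab : ∀ i, i ≤ N → a i + b i ≤ 1)
    (π : ℕ → ℝ) (hπ : IsBDFix N a b π)
    (hZ1 : ∀ i j : ℕ, i + j ≤ N → a i ≤ Zp N f g h i j)
    (hZ2 : ∀ i j : ℕ, i + j ≤ N → Zm N f g h i j ≤ b i)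
    (hZ3 : ∀ i j : ℕ, i + j ≤ N → a (i - 1) ≤ 1 - Zm N f g h i j) :
    ∀ i j : ℕ, i + j ≤ N → π i ≤ α (i, j) := by
  classical
  obtain ⟨hA, hB0, hC0, hMeq⟩ := hα
  obtain ⟨hp0, hpN, hprec⟩ := hπ
  -- Step 1: π is monotone
  have hrecπ : ∀ i, 0 < i → i < N →
      a i * (π (i + 1) - π i) = b i * (π (i - 1 + 1) - π (i - 1)) := by
    intro i h1 h2
    have h3 := hprec i h1 h2
    rw [show i - 1 + 1 = i from by omega]
    linear_combination -h3
  have hd : ∀ i, i < N → 0 ≤ π (i + 1) - π i := by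
    have hrecu : ∀ i, 0 < i → i < N →
        a i * ((fun i => π (i + 1) - π i) i) = b i * ((fun i => π (i + 1) - π i) (i - 1)) := by
      intro i h1 h2
      simpa using hrecπ i h1 h2
    rcases le_or_gt (π (0 + 1) - π 0) 0 with h0 | h0
    · exfalso
      have hall := chain_sign N (fun i => -(π (i + 1) - π i)) a b hapos
        (fun i h1 h2 => (hbpos i h1 h2).le)
        (fun i h1 h2 => by
          simp only [mul_neg]
          exact congrArg Neg.neg (hrecu i h1 h2))
        (by simpa using h0)
      have hmon := accum' (fun k => -(π k)) 0 N
        (fun i _ hi => by have := hall i hi; simp at this ⊢; linarith) N (by omega) le_rfl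
      simp [hp0, hpN] at hmon
      linarith
    · exact chain_sign N (fun i => π (i + 1) - π i) a b hapos
        (fun i h1 h2 => (hbpos i h1 h2).le) hrecu (by simpa using h0.le)
  -- Step 2: α vanishes on the line i = 0
  have zeroline : ∀ k, k ≤ N → α (0, k) = 0 := by
    have hS0 : ∀ j, j ≤ N → 0 < Sfit N f g h 0 j := fun j hj =>
      Sfit_pos N hN f g h 0 j (by omega) (hf 0 j (by omega)) (hg 0 j (by omega))
        (hh 0 j (by omega))
    have hrec0 : ∀ j, 0 < j → j < N →
        pBC N f g h 0 j * (α (0, j + 1) - α (0, j)) =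
        pCB N f g h 0 j * (α (0, j - 1 + 1) - α (0, j - 1)) := by
      intro j hj1 hj2
      have hM0 := hMeq 0 j (by omega) (by omega)
      have z1 : pAB N f g h 0 j = 0 := by simp [pAB]
      have z2 : pBA N f g h 0 j = 0 := by simp [pBA]
      have z3 : pAC N f g h 0 j = 0 := by simp [pAC]
      have z4 : pCA N f g h 0 j = 0 := by simp [pCA]
      rw [z1, z2, z3, z4] at hM0
      rw [show j - 1 + 1 = j from by omega]
      linear_combination -hM0
    have hpBCpos : ∀ j, 0 < j → j < N → 0 < pBC N f g h 0 j := by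
      intro j hj1 hj2
      have hS := hS0 j hj2.le
      unfold pBC
      have hk : 0 < N - 0 - j := by omega
      refine mul_pos (div_pos (mul_pos ?_ (hg 0 j (by omega))) hS) (div_pos ?_ ?_)
      · exact_mod_cast hj1
      · exact_mod_cast hk
      · exact_mod_cast (by omega : 0 < N)
    have hpCBnn : ∀ j, 0 < j → j < N → 0 ≤ pCB N f g h 0 j := by
      intro j hj1 hj2
      have hS := hS0 j hj2.le
      unfold pCB
      exact mul_nonneg (div_nonneg (mul_nonneg (Nat.cast_nonneg _)
        (hh 0 j (by omega)).le) hS.le)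
        (div_nonneg (Nat.cast_nonneg _) (Nat.cast_nonneg _))
    have hpos : 0 ≤ α (0, 0 + 1) - α (0, 0) → ∀ j, j < N → 0 ≤ α (0, j + 1) - α (0, j) := by
      intro h0 j hj
      exact chain_sign N (fun j => α (0, j + 1) - α (0, j)) (fun j => pBC N f g h 0 j)
        (fun j => pCB N f g h 0 j) hpBCpos (fun j h1 h2 => hpCBnn j h1 h2)
        (fun j h1 h2 => hrec0 j h1 h2) h0 j hj
    have hneg : α (0, 0 + 1) - α (0, 0) ≤ 0 → ∀ j, j < N → α (0, j + 1) - α (0, j) ≤ 0 := by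
      intro h0 j hj
      have := chain_sign N (fun j => -(α (0, j + 1) - α (0, j))) (fun j => pBC N f g h 0 j)
        (fun j => pCB N f g h 0 j) hpBCpos (fun j h1 h2 => hpCBnn j h1 h2)
        (fun j h1 h2 => by
          simp only [mul_neg]
          exact congrArg Neg.neg (hrec0 j h1 h2))
        (by simpa using h0) j hj
      simp at this
      linarith
    have heq0 : ∀ j, j < N → α (0, j + 1) - α (0, j) = 0 := by
      rcases lt_trichotomy (α (0, 0 + 1) - α (0, 0)) 0 with hc | hc | hc
      · exfalso
        have hall := hneg hc.le
        have hmon := accum' (fun k => -(α (0, k))) 1 N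
          (fun i hi1 hi2 => by have := hall i hi2; simp at this ⊢; linarith)
          N (by omega) le_rfl
        simp [hB0] at hmon
        rw [hC0] at hc
        norm_num at hc
        linarith
      · intro j hj
        exact le_antisymm (hneg hc.le j hj) (hpos hc.ge j hj)
      · exfalso
        have hall := hpos hc.le
        have hmon := accum' (fun k => α (0, k)) 1 N
          (fun i hi1 hi2 => by have := hall i hi2; simp at this ⊢; linarith)
          N (by omega) le_rfl
        simp [hB0] at hmon
        rw [hC0] at hc
        norm_num at hc
        linarith
    intro k
    induction k with
    | zero => intro _; exact hC0
    | succ n ih =>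
      intro hk
      have hn := heq0 n (by omega)
      have := ih (by omega)
      linarith
  -- Step 3: minimum principle
  set Λ : Finset (ℕ × ℕ) :=
    (Finset.range (N + 1) ×ˢ Finset.range (N + 1)).filter (fun p => p.1 + p.2 ≤ N)
    with hΛdef
  have memΛ : ∀ x y : ℕ, x + y ≤ N → (x, y) ∈ Λ := by
    intro x y hxy
    rw [hΛdef]
    simp only [Finset.mem_filter, Finset.mem_product, Finset.mem_range]
    omega
  have hne : Λ.Nonempty := ⟨(0, 0), memΛ 0 0 (by omega)⟩
  set D : ℕ × ℕ → ℝ := fun p => α p - π p.1 with hD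
  set m : ℝ := Λ.inf' hne D with hmdef
  have hmle : ∀ x y : ℕ, x + y ≤ N → m ≤ α (x, y) - π x := by
    intro x y hxy
    exact Finset.inf'_le D (memΛ x y hxy)
  suffices hm : 0 ≤ m by
    intro i j hij
    have := hmle i j hij
    linarith
  by_contra hmneg
  push_neg at hmneg
  -- minimizers
  set T : Finset (ℕ × ℕ) := Λ.filter (fun p => D p = m) with hTdef
  have hTne : T.Nonempty := by
    obtain ⟨p0, hp0Λ, hp0eq⟩ := Finset.exists_mem_eq_inf' hne D
    exact ⟨p0, Finset.mem_filter.mpr ⟨hp0Λ, hp0eq.symm⟩⟩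
  have hIne : (T.image Prod.fst).Nonempty := hTne.image _
  obtain ⟨p, hpT, hpfst⟩ := Finset.mem_image.mp ((T.image Prod.fst).max'_mem hIne)
  obtain ⟨i, j⟩ := p
  have hmaxT : ∀ x y : ℕ, (x, y) ∈ T → x ≤ i := by
    intro x y hxy
    have := Finset.le_max' (T.image Prod.fst) x (Finset.mem_image_of_mem _ hxy)
    simp only [Prod.fst] at hpfst ⊢
    omega
  have hpΛ' := (Finset.mem_filter.mp hpT).1
  have hpD : D (i, j) = m := (Finset.mem_filter.mp hpT).2
  have hij : i + j ≤ N := by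
    have h' := hpΛ'
    rw [hΛdef] at h'
    exact (Finset.mem_filter.mp h').2
  have hpD' : α (i, j) - π i = m := by simpa [hD] using hpD
  have hi0 : 0 < i := by
    rcases Nat.eq_zero_or_pos i with h0 | h0
    · exfalso
      have hz := zeroline j (by omega)
      rw [h0] at hpD'
      rw [hz, hp0] at hpD'
      linarith
    · exact h0
  have hiN : i < N := by
    rcases Nat.lt_or_ge i N with hlt | hge
    · exact hlt
    · exfalso
      have hi : i = N := by omega
      have hj : j = 0 := by omega
      rw [hi, hj, hA, hpN] at hpD'
      linarith
  -- interior equations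
  have hM := hMeq i j hij (by omega)
  have hBi := hprec i hi0 hiN
  have hDm : m = α (i, j) - π i := hpD'.symm
  have hS : 0 < Sfit N f g h i j :=
    Sfit_pos N hN f g h i j hij (hf i j hij) (hg i j hij) (hh i j hij)
  have key : pAB N f g h i j * (α (i + 1, j - 1) - π (i + 1) - m)
      + pBA N f g h i j * (α (i - 1, j + 1) - π (i - 1) - m)
      + pAC N f g h i j * (α (i + 1, j) - π (i + 1) - m)
      + pCA N f g h i j * (α (i - 1, j) - π (i - 1) - m)
      + pBC N f g h i j * (α (i, j + 1) - π i - m)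
      + pCB N f g h i j * (α (i, j - 1) - π i - m)
      + (pAB N f g h i j + pAC N f g h i j - a i) * (π (i + 1) - π i)
      + (b i - (pBA N f g h i j + pCA N f g h i j)) * (π i - π (i - 1)) = 0 := by
    linear_combination -hM + hBi -
      (pAB N f g h i j + pBA N f g h i j + pAC N f g h i j + pCA N f g h i j +
        pBC N f g h i j + pCB N f g h i j) * hDm
  -- nonnegativity of the p's
  have hP1n : 0 ≤ pAB N f g h i j :=
    mul_nonneg (div_nonneg (mul_nonneg (Nat.cast_nonneg i) (hf i j hij).le) hS.le)
      (div_nonneg (Nat.cast_nonneg j) (Nat.cast_nonneg N))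
  have hP2n : 0 ≤ pBA N f g h i j :=
    mul_nonneg (div_nonneg (mul_nonneg (Nat.cast_nonneg j) (hg i j hij).le) hS.le)
      (div_nonneg (Nat.cast_nonneg i) (Nat.cast_nonneg N))
  have hP3n : 0 ≤ pAC N f g h i j :=
    mul_nonneg (div_nonneg (mul_nonneg (Nat.cast_nonneg i) (hf i j hij).le) hS.le)
      (div_nonneg (Nat.cast_nonneg _) (Nat.cast_nonneg N))
  have hP4n : 0 ≤ pCA N f g h i j :=
    mul_nonneg (div_nonneg (mul_nonneg (Nat.cast_nonneg _) (hh i j hij).le) hS.le)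
      (div_nonneg (Nat.cast_nonneg i) (Nat.cast_nonneg N))
  have hP5n : 0 ≤ pBC N f g h i j :=
    mul_nonneg (div_nonneg (mul_nonneg (Nat.cast_nonneg j) (hg i j hij).le) hS.le)
      (div_nonneg (Nat.cast_nonneg _) (Nat.cast_nonneg N))
  have hP6n : 0 ≤ pCB N f g h i j :=
    mul_nonneg (div_nonneg (mul_nonneg (Nat.cast_nonneg _) (hh i j hij).le) hS.le)
      (div_nonneg (Nat.cast_nonneg j) (Nat.cast_nonneg N))
  -- nonnegativity of the six coupling terms
  have t1 : 0 ≤ pAB N f g h i j * (α (i + 1, j - 1) - π (i + 1) - m) :=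
    mul_nonneg hP1n (by have := hmle (i + 1) (j - 1) (by omega); linarith)
  have t2 : 0 ≤ pBA N f g h i j * (α (i - 1, j + 1) - π (i - 1) - m) :=
    mul_nonneg hP2n (by have := hmle (i - 1) (j + 1) (by omega); linarith)
  have t4 : 0 ≤ pCA N f g h i j * (α (i - 1, j) - π (i - 1) - m) :=
    mul_nonneg hP4n (by have := hmle (i - 1) j (by omega); linarith)
  have t6 : 0 ≤ pCB N f g h i j * (α (i, j - 1) - π i - m) :=
    mul_nonneg hP6n (by have := hmle i (j - 1) (by omega); linarith)
  have t3 : 0 ≤ pAC N f g h i j * (α (i + 1, j) - π (i + 1) - m) := by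
    by_cases hc : i + j = N
    · have hk0 : N - i - j = 0 := by omega
      have hz : pAC N f g h i j = 0 := by simp [pAC, hk0]
      rw [hz]; simp
    · exact mul_nonneg hP3n (by have := hmle (i + 1) j (by omega); linarith)
  have t5 : 0 ≤ pBC N f g h i j * (α (i, j + 1) - π i - m) := by
    by_cases hc : i + j = N
    · have hk0 : N - i - j = 0 := by omega
      have hz : pBC N f g h i j = 0 := by simp [pBC, hk0]
      rw [hz]; simp
    · exact mul_nonneg hP5n (by have := hmle i (j + 1) (by omega); linarith)
  -- nonnegativity of the drift terms
  have hd2 : 0 ≤ π i - π (i - 1) := by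
    have := hd (i - 1) (by omega)
    rw [show i - 1 + 1 = i from by omega] at this
    exact this
  have hR1 : 0 ≤ (pAB N f g h i j + pAC N f g h i j - a i) * (π (i + 1) - π i) := by
    have hz1 := hZ1 i j hij
    simp only [Zp] at hz1
    exact mul_nonneg (by linarith) (hd i hiN)
  have hR2 : 0 ≤ (b i - (pBA N f g h i j + pCA N f g h i j)) * (π i - π (i - 1)) := by
    have hz2 := hZ2 i j hij
    simp only [Zm] at hz2
    exact mul_nonneg (by linarith) hd2
  -- final contradiction
  have hNr : (0 : ℝ) < N := by exact_mod_cast (by omega : 0 < N)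
  by_cases hc : i + j = N
  · -- the pAB transition is active
    have hj : 0 < j := by omega
    have hP1pos : 0 < pAB N f g h i j :=
      mul_pos (div_pos (mul_pos (by exact_mod_cast hi0) (hf i j hij)) hS)
        (div_pos (by exact_mod_cast hj) hNr)
    have ht1le : pAB N f g h i j * (α (i + 1, j - 1) - π (i + 1) - m) ≤ 0 := by
      linarith
    have hXle : α (i + 1, j - 1) - π (i + 1) ≤ m := by
      by_contra hcon
      push_neg at hcon
      have hprod :=
        mul_pos hP1pos (by linarith : (0:ℝ) < α (i + 1, j - 1) - π (i + 1) - m)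
      linarith
    have hXge := hmle (i + 1) (j - 1) (by omega)
    have hmemT : (i + 1, j - 1) ∈ T := by
      rw [hTdef]
      refine Finset.mem_filter.mpr ⟨memΛ _ _ (by omega), ?_⟩
      show α (i + 1, j - 1) - π (i + 1) = m
      linarith
    have := hmaxT (i + 1) (j - 1) hmemT
    omega
  · -- the pAC transition is active
    have hk : 0 < N - i - j := by omega
    have hP3pos : 0 < pAC N f g h i j :=
      mul_pos (div_pos (mul_pos (by exact_mod_cast hi0) (hf i j hij)) hS)
        (div_pos (by exact_mod_cast hk) hNr)
    have ht3le : pAC N f g h i j * (α (i + 1, j) - π (i + 1) - m) ≤ 0 := by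
      linarith
    have hXle : α (i + 1, j) - π (i + 1) ≤ m := by
      by_contra hcon
      push_neg at hcon
      have hprod :=
        mul_pos hP3pos (by linarith : (0:ℝ) < α (i + 1, j) - π (i + 1) - m)
      linarith
    have hXge := hmle (i + 1) j (by omega)
    have hmemT : (i + 1, j) ∈ T := by
      rw [hTdef]
      refine Finset.mem_filter.mpr ⟨memΛ _ _ (by omega), ?_⟩
      show α (i + 1, j) - π (i + 1) = m
      linarith
    have := hmaxT (i + 1) j hmemT
    omega
end

section
/- (Coupling upper bound) Under the same setup, if there is a birth-death process with a_i ≥ Z^+_{ij}, b_i ≤ Z^-_{ij}, and b_{i+1} ≤ 1 - Z^+_{ij} for all (i,j) ∈ Λ_N, then α_{ij} ≤ π_i for all (i,j) ∈ Λ_N. -/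
/-- Number of remaining steps on the canonical escape path to an absorbing state. -/
def couplingMu (N i j : ℕ) : ℕ := if j = 0 ∧ 0 < i then N - i else N - j

/-- Coupling upper bound: if a birth-death comparison process satisfies
`a_i ≥ Z⁺_{ij}`, `b_i ≤ Z⁻_{ij}` and `b_{i+1} ≤ 1 - Z⁺_{ij}` for all
`(i,j) ∈ Λ_N`, then the fixation probability of strategy A in the Moran
process with three strategies is dominated by the fixation probability at `N`
of the birth-death process: `α_{ij} ≤ π_i`. -/
theorem coupling_upper_bound (N : ℕ) (hN : 1 ≤ N) (f g h : ℕ → ℕ → ℝ)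
    (hf : ∀ i j : ℕ, i + j ≤ N → 0 < f i j)
    (hg : ∀ i j : ℕ, i + j ≤ N → 0 < g i j)
    (hh : ∀ i j : ℕ, i + j ≤ N → 0 < h i j)
    (α : ℕ × ℕ → ℝ) (hα : IsMoranFix N f g h 1 0 0 α)
    (a b : ℕ → ℝ) (ha0 : a 0 = 0) (hbN : b N = 0)
    (hapos : ∀ i, 0 < i → i < N → 0 < a i)
    (hbpos : ∀ i, 0 < i → i < N → 0 < b i)
    (hab : ∀ i, i ≤ N → a i + b i ≤ 1)
    (π : ℕ → ℝ) (hπ : IsBDFix N a b π)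
    (hZ1 : ∀ i j : ℕ, i + j ≤ N → Zp N f g h i j ≤ a i)
    (hZ2 : ∀ i j : ℕ, i + j ≤ N → b i ≤ Zm N f g h i j)
    (hZ3 : ∀ i j : ℕ, i + j ≤ N → b (i + 1) ≤ 1 - Zp N f g h i j) :
    ∀ i j : ℕ, i + j ≤ N → α (i, j) ≤ π i := by

  classical
  obtain ⟨hαA, hαB, hαC, hαharm⟩ := hα
  obtain ⟨hπ0, hπN, hπharm⟩ := hπ
  have hNpos : (0:ℝ) < (N:ℝ) := by exact_mod_cast hN
  -- the birth-death relation between successive increments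
  have hrel : ∀ k, 0 < k → k < N →
      a k * (π (k+1) - π k) = b k * (π k - π (k-1)) := by
    intro k hk hkN
    have hE := hπharm k hk hkN
    linear_combination -hE
  -- increments are nonnegative
  have hneg : ∀ k, k < N → π 1 - π 0 ≤ 0 → π (k+1) - π k ≤ 0 := by
    intro k
    induction k with
    | zero => intro _ hle; exact hle
    | succ k ih =>
      intro hkN hle
      have hdk := ih (by omega) hle
      have hr := hrel (k+1) (by omega) hkN
      have hb := hbpos (k+1) (by omega) hkN
      have ha := hapos (k+1) (by omega) hkN
      simp only [Nat.add_sub_cancel] at hr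
      nlinarith
  have hsum : ∑ k ∈ Finset.range N, (π (k+1) - π k) = 1 := by
    rw [Finset.sum_range_sub π N, hπN, hπ0]; ring
  have hd0 : 0 ≤ π 1 - π 0 := by
    by_contra hc
    push_neg at hc
    have hle : ∑ k ∈ Finset.range N, (π (k+1) - π k) ≤ 0 :=
      Finset.sum_nonpos (fun k hk => hneg k (Finset.mem_range.mp hk) hc.le)
    linarith
  have hdnn : ∀ k, k < N → 0 ≤ π (k+1) - π k := by
    intro k
    induction k with
    | zero => intro _; exact hd0
    | succ k ih =>
      intro hkN
      have hdk := ih (by omega)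
      have hr := hrel (k+1) (by omega) hkN
      have hb := hbpos (k+1) (by omega) hkN
      have ha := hapos (k+1) (by omega) hkN
      simp only [Nat.add_sub_cancel] at hr
      nlinarith
  -- positivity of the total fitness
  have hSpos : ∀ i j, i + j ≤ N → 0 < Sfit N f g h i j := by
    intro i j hij
    have hf' := hf i j hij
    have hg' := hg i j hij
    have hh' := hh i j hij
    have hjn : (0:ℝ) ≤ (j:ℝ) := Nat.cast_nonneg j
    have hin : (0:ℝ) ≤ (i:ℝ) := Nat.cast_nonneg i
    have hkn : (0:ℝ) ≤ ((N - i - j : ℕ):ℝ) := Nat.cast_nonneg _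
    have hcase : 0 < i ∨ 0 < j ∨ 0 < N - i - j := by omega
    unfold Sfit
    rcases hcase with hc | hc | hc
    · have h1 : (0:ℝ) < (i:ℝ) := by exact_mod_cast hc
      nlinarith [mul_nonneg hjn hg'.le, mul_nonneg hkn hh'.le]
    · have h1 : (0:ℝ) < (j:ℝ) := by exact_mod_cast hc
      nlinarith [mul_nonneg hin hf'.le, mul_nonneg hkn hh'.le]
    · have h1 : (0:ℝ) < ((N - i - j : ℕ):ℝ) := by exact_mod_cast hc
      nlinarith [mul_nonneg hin hf'.le, mul_nonneg hjn hg'.le]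
  -- nonnegativity of all transition probabilities
  have hnAB : ∀ i j, i + j ≤ N → 0 ≤ pAB N f g h i j := fun i j hij =>
    mul_nonneg (div_nonneg (mul_nonneg (Nat.cast_nonneg i) (hf i j hij).le)
      (hSpos i j hij).le) (div_nonneg (Nat.cast_nonneg j) hNpos.le)
  have hnBA : ∀ i j, i + j ≤ N → 0 ≤ pBA N f g h i j := fun i j hij =>
    mul_nonneg (div_nonneg (mul_nonneg (Nat.cast_nonneg j) (hg i j hij).le)
      (hSpos i j hij).le) (div_nonneg (Nat.cast_nonneg i) hNpos.le)
  have hnAC : ∀ i j, i + j ≤ N → 0 ≤ pAC N f g h i j := fun i j hij =>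
    mul_nonneg (div_nonneg (mul_nonneg (Nat.cast_nonneg i) (hf i j hij).le)
      (hSpos i j hij).le) (div_nonneg (Nat.cast_nonneg _) hNpos.le)
  have hnCA : ∀ i j, i + j ≤ N → 0 ≤ pCA N f g h i j := fun i j hij =>
    mul_nonneg (div_nonneg (mul_nonneg (Nat.cast_nonneg _) (hh i j hij).le)
      (hSpos i j hij).le) (div_nonneg (Nat.cast_nonneg i) hNpos.le)
  have hnBC : ∀ i j, i + j ≤ N → 0 ≤ pBC N f g h i j := fun i j hij =>
    mul_nonneg (div_nonneg (mul_nonneg (Nat.cast_nonneg j) (hg i j hij).le)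
      (hSpos i j hij).le) (div_nonneg (Nat.cast_nonneg _) hNpos.le)
  have hnCB : ∀ i j, i + j ≤ N → 0 ≤ pCB N f g h i j := fun i j hij =>
    mul_nonneg (div_nonneg (mul_nonneg (Nat.cast_nonneg _) (hh i j hij).le)
      (hSpos i j hij).le) (div_nonneg (Nat.cast_nonneg j) hNpos.le)
  -- the comparison function
  set F : ℕ × ℕ → ℝ := fun x => π x.1 - α x with hF
  have hFp : ∀ p q : ℕ, F (p, q) = π p - α (p, q) := fun p q => rfl
  -- superharmonicity of F for the Moran chain
  have hsup : ∀ i j, i + j ≤ N → ¬(i = N ∨ j = N ∨ (i = 0 ∧ j = 0)) →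
      pAB N f g h i j * F (i + 1, j - 1) + pBA N f g h i j * F (i - 1, j + 1) +
      pAC N f g h i j * F (i + 1, j) + pCA N f g h i j * F (i - 1, j) +
      pBC N f g h i j * F (i, j + 1) + pCB N f g h i j * F (i, j - 1) +
      (1 - (pAB N f g h i j + pBA N f g h i j + pAC N f g h i j +
            pCA N f g h i j + pBC N f g h i j + pCB N f g h i j)) * F (i, j)
        ≤ F (i, j) := by
    intro i j hij htr
    have hM := hαharm i j hij htr
    have hπs : (pAB N f g h i j + pAC N f g h i j) * (π (i+1) - π i) ≤
        (pBA N f g h i j + pCA N f g h i j) * (π i - π (i-1)) := by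
      rcases Nat.eq_zero_or_pos i with hi0 | hip
      · subst hi0
        simp [pAB, pAC, pBA, pCA]
      · have hiN : i < N := by
          push_neg at htr; omega
        have h1 : pAB N f g h i j + pAC N f g h i j ≤ a i := by
          have := hZ1 i j hij; simpa [Zp] using this
        have h2 : b i ≤ pBA N f g h i j + pCA N f g h i j := by
          have := hZ2 i j hij; simpa [Zm] using this
        have hdi : 0 ≤ π (i+1) - π i := hdnn i hiN
        have hdi1 : 0 ≤ π i - π (i-1) := by
          have h' := hdnn (i-1) (by omega)
          have h'' : i - 1 + 1 = i := by omega
          rwa [h''] at h'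
        have hr := hrel i hip hiN
        calc (pAB N f g h i j + pAC N f g h i j) * (π (i+1) - π i)
            ≤ a i * (π (i+1) - π i) := mul_le_mul_of_nonneg_right h1 hdi
          _ = b i * (π i - π (i-1)) := hr
          _ ≤ (pBA N f g h i j + pCA N f g h i j) * (π i - π (i-1)) :=
              mul_le_mul_of_nonneg_right h2 hdi1
    simp only [hFp]
    linarith [hπs, hM]
  -- the finite state space, and the minimum of F over it
  set Lam : Finset (ℕ × ℕ) :=
    (Finset.range (N+1) ×ˢ Finset.range (N+1)).filter (fun x => x.1 + x.2 ≤ N) with hLam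
  have hmemL : ∀ i j, i + j ≤ N → (i, j) ∈ Lam := by
    intro i j hij
    simp only [hLam, Finset.mem_filter, Finset.mem_product, Finset.mem_range]
    omega
  have hne : Lam.Nonempty := ⟨(0,0), hmemL 0 0 (by omega)⟩
  set m := Lam.inf' hne F with hm
  have hm_le : ∀ i j, i + j ≤ N → m ≤ F (i, j) := fun i j hij =>
    Finset.inf'_le F (hmemL i j hij)
  have hterm : ∀ (p : ℝ) (p1 p2 : ℕ), 0 ≤ p → (p ≠ 0 → p1 + p2 ≤ N) →
      p * m ≤ p * F (p1, p2) := by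
    intro p p1 p2 hp hx
    rcases eq_or_ne p 0 with h0 | h0
    · simp [h0]
    · exact mul_le_mul_of_nonneg_left (hm_le p1 p2 (hx h0)) hp
  -- propagation of the minimum towards the absorbing states
  have hprop : ∀ i j, i + j ≤ N → ¬(i = N ∨ j = N ∨ (i = 0 ∧ j = 0)) →
      F (i, j) = m →
      ∃ p q, p + q ≤ N ∧ couplingMu N p q < couplingMu N i j ∧ F (p, q) = m := by
    intro i j hij htr hFm
    have hS := hSpos i j hij
    have hloc := hsup i j hij htr
    rw [hFm] at hloc
    push_neg at htr
    obtain ⟨hiN, hjN, h00⟩ := htr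
    rcases Nat.eq_zero_or_pos i with hi0 | hip
    · -- i = 0, 0 < j < N : climb j using pBC
      subst hi0
      have hjp : 0 < j := by omega
      have hjltN : j < N := by omega
      have hk : 0 < N - 0 - j := by omega
      have hstar : 0 < pBC N f g h 0 j := by
        exact mul_pos (div_pos (mul_pos (by exact_mod_cast hjp) (hg 0 j hij)) hS)
          (div_pos (by exact_mod_cast hk) hNpos)
      refine ⟨0, j + 1, by omega, ?_, ?_⟩
      · unfold couplingMu
        rw [if_neg (by omega : ¬(j + 1 = 0 ∧ 0 < 0)), if_neg (by omega : ¬(j = 0 ∧ 0 < 0))]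
        omega
      · have t1 := hterm (pAB N f g h 0 j) (0+1) (j-1) (hnAB 0 j hij)
          (fun hne0 => absurd (by simp [pAB] : pAB N f g h 0 j = 0) hne0)
        have t2 := hterm (pBA N f g h 0 j) (0-1) (j+1) (hnBA 0 j hij)
          (fun _ => by omega)
        have t3 := hterm (pAC N f g h 0 j) (0+1) j (hnAC 0 j hij)
          (fun hne0 => absurd (by simp [pAC] : pAC N f g h 0 j = 0) hne0)
        have t4 := hterm (pCA N f g h 0 j) (0-1) j (hnCA 0 j hij)
          (fun _ => by omega)
        have t5 := hterm (pCB N f g h 0 j) 0 (j-1) (hnCB 0 j hij)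
          (fun _ => by omega)
        have hring : pAB N f g h 0 j * m + pBA N f g h 0 j * m + pAC N f g h 0 j * m +
            pCA N f g h 0 j * m + pCB N f g h 0 j * m +
            (1 - (pAB N f g h 0 j + pBA N f g h 0 j + pAC N f g h 0 j +
              pCA N f g h 0 j + pBC N f g h 0 j + pCB N f g h 0 j)) * m
            = m - pBC N f g h 0 j * m := by ring
        have hle : pBC N f g h 0 j * F (0, j+1) ≤ pBC N f g h 0 j * m := by
          linarith [t1, t2, t3, t4, t5, hloc, hring]
        exact le_antisymm (le_of_mul_le_mul_left hle hstar)
          (hm_le 0 (j+1) (by omega))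
    · rcases Nat.eq_zero_or_pos j with hj0 | hjp
      · -- j = 0, 0 < i < N : climb i using pAC
        subst hj0
        have hiltN : i < N := by omega
        have hk : 0 < N - i - 0 := by omega
        have hstar : 0 < pAC N f g h i 0 := by
          exact mul_pos (div_pos (mul_pos (by exact_mod_cast hip) (hf i 0 hij)) hS)
            (div_pos (by exact_mod_cast hk) hNpos)
        refine ⟨i + 1, 0, by omega, ?_, ?_⟩
        · unfold couplingMu
          rw [if_pos (⟨rfl, by omega⟩ : 0 = 0 ∧ 0 < i + 1), if_pos (⟨rfl, hip⟩ : 0 = 0 ∧ 0 < i)]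
          omega
        · have t1 := hterm (pAB N f g h i 0) (i+1) (0-1) (hnAB i 0 hij)
            (fun hne0 => absurd (by simp [pAB] : pAB N f g h i 0 = 0) hne0)
          have t2 := hterm (pBA N f g h i 0) (i-1) (0+1) (hnBA i 0 hij)
            (fun _ => by omega)
          have t4 := hterm (pCA N f g h i 0) (i-1) 0 (hnCA i 0 hij)
            (fun _ => by omega)
          have t5 := hterm (pBC N f g h i 0) i (0+1) (hnBC i 0 hij)
            (fun hne0 => absurd (by simp [pBC] : pBC N f g h i 0 = 0) hne0)
          have t6 := hterm (pCB N f g h i 0) i (0-1) (hnCB i 0 hij)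
            (fun _ => by omega)
          have hring : pAB N f g h i 0 * m + pBA N f g h i 0 * m + pCA N f g h i 0 * m +
              pBC N f g h i 0 * m + pCB N f g h i 0 * m +
              (1 - (pAB N f g h i 0 + pBA N f g h i 0 + pAC N f g h i 0 +
                pCA N f g h i 0 + pBC N f g h i 0 + pCB N f g h i 0)) * m
              = m - pAC N f g h i 0 * m := by ring
          have hle : pAC N f g h i 0 * F (i+1, 0) ≤ pAC N f g h i 0 * m := by
            linarith [t1, t2, t4, t5, t6, hloc, hring]
          exact le_antisymm (le_of_mul_le_mul_left hle hstar)
            (hm_le (i+1) 0 (by omega))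
      · -- 0 < i, 0 < j : decrease i using pBA
        have hjltN : j < N := by omega
        have hstar : 0 < pBA N f g h i j := by
          exact mul_pos (div_pos (mul_pos (by exact_mod_cast hjp) (hg i j hij)) hS)
            (div_pos (by exact_mod_cast hip) hNpos)
        refine ⟨i - 1, j + 1, by omega, ?_, ?_⟩
        · unfold couplingMu
          rw [if_neg (by omega : ¬(j + 1 = 0 ∧ 0 < i - 1)), if_neg (by omega : ¬(j = 0 ∧ 0 < i))]
          omega
        · have t1 := hterm (pAB N f g h i j) (i+1) (j-1) (hnAB i j hij)
            (fun _ => by omega)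
          have t3 := hterm (pAC N f g h i j) (i+1) j (hnAC i j hij)
            (fun hne0 => by
              by_contra hcon
              have hk0 : N - i - j = 0 := by omega
              exact hne0 (by simp [pAC, hk0]))
          have t4 := hterm (pCA N f g h i j) (i-1) j (hnCA i j hij)
            (fun _ => by omega)
          have t5 := hterm (pBC N f g h i j) i (j+1) (hnBC i j hij)
            (fun hne0 => by
              by_contra hcon
              have hk0 : N - i - j = 0 := by omega
              exact hne0 (by simp [pBC, hk0]))
          have t6 := hterm (pCB N f g h i j) i (j-1) (hnCB i j hij)
            (fun _ => by omega)
          have hring : pAB N f g h i j * m + pAC N f g h i j * m + pCA N f g h i j * m +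
              pBC N f g h i j * m + pCB N f g h i j * m +
              (1 - (pAB N f g h i j + pBA N f g h i j + pAC N f g h i j +
                pCA N f g h i j + pBC N f g h i j + pCB N f g h i j)) * m
              = m - pBA N f g h i j * m := by ring
          have hle : pBA N f g h i j * F (i-1, j+1) ≤ pBA N f g h i j * m := by
            linarith [t1, t3, t4, t5, t6, hloc, hring]
          exact le_antisymm (le_of_mul_le_mul_left hle hstar)
            (hm_le (i-1) (j+1) (by omega))
  -- at absorbing states F vanishes
  have habs : ∀ i j, i + j ≤ N → (i = N ∨ j = N ∨ (i = 0 ∧ j = 0)) →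
      F (i, j) = m → (0:ℝ) ≤ m := by
    intro i j hij hc hFm
    rcases hc with hc | hc | ⟨hc1, hc2⟩
    · have hj : j = 0 := by omega
      subst hc; subst hj
      rw [hFp, hπN, hαA] at hFm; linarith
    · have hi : i = 0 := by omega
      subst hc; subst hi
      rw [hFp, hπ0, hαB] at hFm; linarith
    · subst hc1; subst hc2
      rw [hFp, hπ0, hαC] at hFm; linarith
  -- the minimum is nonnegative (induction on the distance to absorption)
  have key : ∀ n i j, i + j ≤ N → couplingMu N i j ≤ n → F (i, j) = m → (0:ℝ) ≤ m := by
    intro n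
    induction n with
    | zero =>
      intro i j hij hμ hFm
      by_cases hc : i = N ∨ j = N ∨ (i = 0 ∧ j = 0)
      · exact habs i j hij hc hFm
      · obtain ⟨p, q, _, hlt, _⟩ := hprop i j hij hc hFm
        omega
    | succ n ih =>
      intro i j hij hμ hFm
      by_cases hc : i = N ∨ j = N ∨ (i = 0 ∧ j = 0)
      · exact habs i j hij hc hFm
      · obtain ⟨p, q, hpq, hlt, hF'⟩ := hprop i j hij hc hFm
        exact ih p q hpq (by omega) hF'
  have h0m : (0:ℝ) ≤ m := by
    obtain ⟨x, hx, hxe⟩ := Finset.exists_mem_eq_inf' hne F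
    have hxΛ : x.1 + x.2 ≤ N := by
      rw [hLam] at hx
      exact (Finset.mem_filter.mp hx).2
    exact key (couplingMu N x.1 x.2) x.1 x.2 hxΛ le_rfl hxe.symm
  intro i j hij
  have h1 : m ≤ F (i, j) := hm_le i j hij
  have h2 := hFp i j
  linarith
end

section
/- For frequency-independent fitnesses f > g > h > 0, with a_i = (i f/(i f + (N-i)g))·((N-i)/N), Z^-_{ij} = ((j g + (N-i-j)h)/(i f + j g + (N-i-j)h))·(i/N), the inequality a_{i-1} ≤ 1 - Z^-_{ij} holds for all (i,j) ∈ Λ_N with 1 ≤ i. -/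
/-- Birth probability at state `i` in the two-type (A versus B) comparison
chain with constant fitnesses `f` and `g`. -/
noncomputable def aBD (N : ℕ) (f g : ℝ) (i : ℕ) : ℝ :=
  ((i : ℝ) * f / ((i : ℝ) * f + ((N : ℝ) - (i : ℝ)) * g)) * (((N : ℝ) - (i : ℝ)) / (N : ℝ))

/-- `Z⁻_{ij}` for the three-type Moran process with constant fitnesses. -/
noncomputable def ZmConst (N : ℕ) (f g h : ℝ) (i j : ℕ) : ℝ :=
  (((j : ℝ) * g + ((N : ℝ) - (i : ℝ) - (j : ℝ)) * h) /
    ((i : ℝ) * f + (j : ℝ) * g + ((N : ℝ) - (i : ℝ) - (j : ℝ)) * h)) * ((i : ℝ) / (N : ℝ))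

lemma Qkey (p q k f g h : ℝ) (hp : 0 ≤ p) (hq : 0 ≤ q) (hk : 0 ≤ k)
    (hfg : g < f) (hgh : h < g) (hh : 0 < h) :
    0 ≤ (p+1)*f*(p^2*f + (q+k+1)*g*(p + (q+k+1)))
      + (q*g+k*h)*((q+k+1)*(q+k)*g - p*f) := by
  have hf : 0 < f := lt_trans (lt_trans hh hgh) hfg
  have hg : 0 < g := lt_trans hh hgh
  have hS : 0 ≤ q*g + k*h := by positivity
  rcases le_or_gt (p*f) ((q+k+1)*(q+k)*g) with hc | hc
  · have h1 : 0 ≤ (q*g+k*h)*((q+k+1)*(q+k)*g - p*f) :=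
      mul_nonneg hS (by linarith)
    nlinarith [mul_nonneg (mul_nonneg (by linarith : (0:ℝ) ≤ p+1) hf.le)
      (by positivity : (0:ℝ) ≤ p^2*f + (q+k+1)*g*(p + (q+k+1)))]
  · -- S ≤ (q+k)*g, bracket negative
    have hSle : q*g + k*h ≤ (q+k)*g := by nlinarith [mul_nonneg hk (by linarith : (0:ℝ) ≤ g - h)]
    have h2 : (q*g+k*h)*((q+k+1)*(q+k)*g - p*f) ≥
        ((q+k)*g)*((q+k+1)*(q+k)*g - p*f) := by
      nlinarith [mul_nonneg (by linarith : (0:ℝ) ≤ (q+k)*g - (q*g+k*h))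
        (by linarith : (0:ℝ) ≤ p*f - (q+k+1)*(q+k)*g)]
    have hbr : 0 ≤ (p+1)*(q+k+1)*(p+(q+k+1)) - p*(q+k) := by
      nlinarith [mul_nonneg hp hq, mul_nonneg hp hk, mul_nonneg (mul_nonneg hp hp) hq,
        mul_nonneg (mul_nonneg hp hp) hk, mul_nonneg hq hk, mul_nonneg hp hp]
    have hR : 0 ≤ (p+1)*f*(p^2*f + (q+k+1)*g*(p + (q+k+1)))
        + ((q+k)*g)*((q+k+1)*(q+k)*g - p*f) := by
      nlinarith [mul_nonneg (mul_nonneg hf.le hg.le) hbr,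
        mul_nonneg (mul_nonneg (by linarith : (0:ℝ) ≤ p+1) (sq_nonneg p)) (sq_nonneg f),
        mul_nonneg (by positivity : (0:ℝ) ≤ q+k+1) (sq_nonneg ((q+k)*g))]
    linarith [h2]

/-- For frequency-independent fitnesses `f > g > h > 0`, the inequality
`a_{i-1} ≤ 1 - Z⁻_{ij}` holds for all `(i,j) ∈ Λ_N` with `i ≥ 1`. -/
theorem a_pred_le_one_sub_Zm (N : ℕ) (f g h : ℝ)
    (hfg : g < f) (hgh : h < g) (hh : 0 < h)
    (i j : ℕ) (hi : 1 ≤ i) (hij : i + j ≤ N) :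
    aBD N f g (i - 1) ≤ 1 - ZmConst N f g h i j := by
  have hf : 0 < f := lt_trans (lt_trans hh hgh) hfg
  have hg : 0 < g := lt_trans hh hgh
  obtain ⟨p, rfl⟩ : ∃ p, i = p + 1 := ⟨i - 1, (Nat.succ_pred_eq_of_pos hi).symm⟩
  obtain ⟨k, rfl⟩ : ∃ k, N = p + 1 + j + k := ⟨N - (p+1+j), (Nat.add_sub_cancel' hij).symm⟩
  unfold aBD ZmConst
  have e1 : (p + 1 - 1 : ℕ) = p := rfl
  rw [e1]
  push_cast
  set P := (p : ℝ); set Q := (j : ℝ); set K := (k : ℝ)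
  have hP : 0 ≤ P := Nat.cast_nonneg p
  have hQ : 0 ≤ Q := Nat.cast_nonneg j
  have hK : 0 ≤ K := Nat.cast_nonneg k
  have hB : 0 < P * f + (P + 1 + Q + K - P) * g := by
    have : P + 1 + Q + K - P = Q + K + 1 := by ring
    rw [this]; positivity
  have hF : 0 < (P + 1) * f + Q * g + (P + 1 + Q + K - (P + 1) - Q) * h := by
    have : P + 1 + Q + K - (P + 1) - Q = K := by ring
    rw [this]; positivity
  have hN : (0:ℝ) < P + 1 + Q + K := by linarith
  rw [← sub_nonneg]
  have key : 1 - (Q * g + (P + 1 + Q + K - (P + 1) - Q) * h) /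
        ((P + 1) * f + Q * g + (P + 1 + Q + K - (P + 1) - Q) * h) * ((P + 1) / (P + 1 + Q + K))
      - P * f / (P * f + (P + 1 + Q + K - P) * g) * ((P + 1 + Q + K - P) / (P + 1 + Q + K))
      = ((P+1)*f*(P^2*f + (Q+K+1)*g*(P + (Q+K+1))) + (Q*g+K*h)*((Q+K+1)*(Q+K)*g - P*f))
        / ((P * f + (P + 1 + Q + K - P) * g) *
           (((P + 1) * f + Q * g + (P + 1 + Q + K - (P + 1) - Q) * h) * (P + 1 + Q + K))) := by
    have e2 : P + 1 + Q + K - P = Q + K + 1 := by ring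
    have e3 : P + 1 + Q + K - (P + 1) - Q = K := by ring
    rw [e2, e3]
    have hB2 : P * f + (Q + K + 1) * g ≠ 0 := by positivity
    have hF2 : (P + 1) * f + Q * g + K * h ≠ 0 := by positivity
    have hN2 : P + 1 + Q + K ≠ 0 := by positivity
    field_simp
    ring
  rw [key]
  exact div_nonneg (Qkey P Q K f g h hP hQ hK hfg hgh hh)
    (le_of_lt (by positivity))
end

section
/- (Comparison of fixation probabilities) Let r_1,...,r_{N-1} and s_1,...,s_{N-1} be positive reals with r_i > s_i for all i. Define π_i = (1 + Σ_{j=1}^{i-1} Π_{k=1}^{j} r_k^{-1})/(1 + Σ_{j=1}^{N-1} Π_{k=1}^{j} r_k^{-1}) and π'_i analogously with s in place of r. Then π_i > π'_i for all i ∈ {1,...,N-1}. -/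
open Finset

/-- The standard fixation-probability formula for a birth-death process with
birth-to-death ratios `r`. -/
noncomputable def piFix (N : ℕ) (r : ℕ → ℝ) (i : ℕ) : ℝ :=
  (1 + ∑ j ∈ Finset.Icc 1 (i - 1), ∏ k ∈ Finset.Icc 1 j, (r k)⁻¹) /
  (1 + ∑ j ∈ Finset.Icc 1 (N - 1), ∏ k ∈ Finset.Icc 1 j, (r k)⁻¹)

private lemma fix_prodpos (M : ℕ) (f : ℕ → ℝ) (hf : ∀ k, 1 ≤ k → k ≤ M → 0 < f k)
    (a b : ℕ) (hb : b ≤ M) : 0 < ∏ k ∈ Ioc a b, (f k)⁻¹ := by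
  refine Finset.prod_pos fun k hk => ?_
  rw [Finset.mem_Ioc] at hk
  exact inv_pos.2 (hf k (Nat.lt_of_le_of_lt (Nat.zero_le a) hk.1) (hk.2.trans hb))

private lemma fix_prodle (M : ℕ) (r s : ℕ → ℝ)
    (hs : ∀ k, 1 ≤ k → k ≤ M → 0 < s k)
    (hrs : ∀ k, 1 ≤ k → k ≤ M → s k < r k)
    (a b : ℕ) (hb : b ≤ M) :
    ∏ k ∈ Ioc a b, (r k)⁻¹ ≤ ∏ k ∈ Ioc a b, (s k)⁻¹ := by
  refine Finset.prod_le_prod (fun k hk => ?_) (fun k hk => ?_) <;>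
    rw [Finset.mem_Ioc] at hk
  · have h1 : 1 ≤ k := Nat.lt_of_le_of_lt (Nat.zero_le a) hk.1
    exact (inv_pos.2 ((hs k h1 (hk.2.trans hb)).trans (hrs k h1 (hk.2.trans hb)))).le
  · have h1 : 1 ≤ k := Nat.lt_of_le_of_lt (Nat.zero_le a) hk.1
    exact (inv_anti₀ (hs k h1 (hk.2.trans hb)) (hrs k h1 (hk.2.trans hb)).le)

private lemma fix_key (M m : ℕ) (hm : m < M) (r s : ℕ → ℝ)
    (hs : ∀ k, 1 ≤ k → k ≤ M → 0 < s k)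
    (hrs : ∀ k, 1 ≤ k → k ≤ M → s k < r k) :
    (1 + ∑ j ∈ Icc 1 m, ∏ k ∈ Icc 1 j, (s k)⁻¹) *
      (1 + ∑ j ∈ Icc 1 M, ∏ k ∈ Icc 1 j, (r k)⁻¹) <
    (1 + ∑ j ∈ Icc 1 m, ∏ k ∈ Icc 1 j, (r k)⁻¹) *
      (1 + ∑ j ∈ Icc 1 M, ∏ k ∈ Icc 1 j, (s k)⁻¹) := by
  have hr : ∀ k, 1 ≤ k → k ≤ M → 0 < r k := fun k h1 h2 => (hs k h1 h2).trans (hrs k h1 h2)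
  have hIcc : ∀ t : ℕ, Icc 1 t = Ioc 0 t := fun t => Finset.Icc_add_one_left_eq_Ioc 0 t
  -- split the big sum
  have hsplit : ∀ f : ℕ → ℝ,
      ∑ j ∈ Icc 1 M, ∏ k ∈ Icc 1 j, (f k)⁻¹ =
      ∑ j ∈ Icc 1 m, ∏ k ∈ Icc 1 j, (f k)⁻¹ + ∑ j ∈ Ioc m M, ∏ k ∈ Icc 1 j, (f k)⁻¹ := by
    intro f
    rw [hIcc M, hIcc m]
    exact (Finset.sum_Ioc_consecutive _ (Nat.zero_le m) hm.le).symm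
  -- factor the tail products
  have hfac : ∀ (f : ℕ → ℝ) (a b : ℕ), a ≤ b →
      ∏ k ∈ Icc 1 b, (f k)⁻¹ = (∏ k ∈ Icc 1 a, (f k)⁻¹) * ∏ k ∈ Ioc a b, (f k)⁻¹ := by
    intro f a b hab
    rw [hIcc b, hIcc a]
    exact (Finset.prod_Ioc_consecutive _ (Nat.zero_le a) hab).symm
  have htail : ∀ f : ℕ → ℝ,
      ∑ j ∈ Ioc m M, ∏ k ∈ Icc 1 j, (f k)⁻¹ =
      (∏ k ∈ Icc 1 m, (f k)⁻¹) * ∑ j ∈ Ioc m M, ∏ k ∈ Ioc m j, (f k)⁻¹ := by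
    intro f
    rw [Finset.mul_sum]
    refine Finset.sum_congr rfl fun j hj => hfac f m j (Finset.mem_Ioc.1 hj).1.le
  -- key product comparison (raw form)
  have hAraw : (1 + ∑ j ∈ Icc 1 m, ∏ k ∈ Icc 1 j, (s k)⁻¹) * ∏ k ∈ Icc 1 m, (r k)⁻¹ ≤
      (1 + ∑ j ∈ Icc 1 m, ∏ k ∈ Icc 1 j, (r k)⁻¹) * ∏ k ∈ Icc 1 m, (s k)⁻¹ := by
    rw [add_mul, add_mul, one_mul, one_mul, Finset.sum_mul, Finset.sum_mul]
    refine add_le_add ?_ (Finset.sum_le_sum fun j hj => ?_)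
    · rw [hIcc m]; exact fix_prodle M r s hs hrs 0 m hm.le
    · have hjm : j ≤ m := (Finset.mem_Icc.1 hj).2
      rw [hfac r j m hjm, hfac s j m hjm]
      have hpos : 0 ≤ (∏ k ∈ Icc 1 j, (s k)⁻¹) * ∏ k ∈ Icc 1 j, (r k)⁻¹ := by
        have h1 : 0 < ∏ k ∈ Icc 1 j, (s k)⁻¹ := by
          rw [hIcc j]; exact fix_prodpos M s hs 0 j (hjm.trans hm.le)
        have h2 : 0 < ∏ k ∈ Icc 1 j, (r k)⁻¹ := by
          rw [hIcc j]; exact fix_prodpos M r hr 0 j (hjm.trans hm.le)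
        positivity
      calc (∏ k ∈ Icc 1 j, (s k)⁻¹) * ((∏ k ∈ Icc 1 j, (r k)⁻¹) * ∏ k ∈ Ioc j m, (r k)⁻¹)
          = ((∏ k ∈ Icc 1 j, (s k)⁻¹) * ∏ k ∈ Icc 1 j, (r k)⁻¹) * ∏ k ∈ Ioc j m, (r k)⁻¹ := by
            ring
        _ ≤ ((∏ k ∈ Icc 1 j, (s k)⁻¹) * ∏ k ∈ Icc 1 j, (r k)⁻¹) * ∏ k ∈ Ioc j m, (s k)⁻¹ :=
            mul_le_mul_of_nonneg_left (fix_prodle M r s hs hrs j m hm.le) hpos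
        _ = (∏ k ∈ Icc 1 j, (r k)⁻¹) * ((∏ k ∈ Icc 1 j, (s k)⁻¹) * ∏ k ∈ Ioc j m, (s k)⁻¹) := by
            ring
  set Pr := ∏ k ∈ Icc 1 m, (r k)⁻¹ with hPr
  set Ps := ∏ k ∈ Icc 1 m, (s k)⁻¹ with hPs
  set Ur := ∑ j ∈ Ioc m M, ∏ k ∈ Ioc m j, (r k)⁻¹ with hUr
  set Us := ∑ j ∈ Ioc m M, ∏ k ∈ Ioc m j, (s k)⁻¹ with hUs
  set Sr := ∑ j ∈ Icc 1 m, ∏ k ∈ Icc 1 j, (r k)⁻¹ with hSr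
  set Ss := ∑ j ∈ Icc 1 m, ∏ k ∈ Icc 1 j, (s k)⁻¹ with hSs
  have hPrpos : 0 < Pr := by rw [hPr, hIcc m]; exact fix_prodpos M r hr 0 m hm.le
  have hPspos : 0 < Ps := by rw [hPs, hIcc m]; exact fix_prodpos M s hs 0 m hm.le
  have hUrpos : 0 < Ur := by
    refine Finset.sum_pos (fun j hj => ?_) ⟨M, Finset.mem_Ioc.2 ⟨hm, le_rfl⟩⟩
    exact fix_prodpos M r hr m j (Finset.mem_Ioc.1 hj).2
  -- U r < U s
  have hU : Ur < Us := by
    refine Finset.sum_lt_sum_of_nonempty ⟨M, Finset.mem_Ioc.2 ⟨hm, le_rfl⟩⟩ fun j hj => ?_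
    rw [Finset.mem_Ioc] at hj
    refine Finset.prod_lt_prod_of_nonempty (fun k hk => ?_) (fun k hk => ?_)
      ⟨j, Finset.mem_Ioc.2 ⟨hj.1, le_rfl⟩⟩
    · rw [Finset.mem_Ioc] at hk
      exact inv_pos.2 (hr k (Nat.lt_of_le_of_lt (Nat.zero_le m) hk.1) (hk.2.trans hj.2))
    · rw [Finset.mem_Ioc] at hk
      have h1 : 1 ≤ k := Nat.lt_of_le_of_lt (Nat.zero_le m) hk.1
      have h2 : k ≤ M := hk.2.trans hj.2
      exact inv_strictAnti₀ (hs k h1 h2) (hrs k h1 h2)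
  have hA : (1 + Ss) * Pr ≤ (1 + Sr) * Ps := hAraw
  have hposR : 0 < (1 + Sr) * Ps := by
    have : 0 ≤ Sr := Finset.sum_nonneg fun j hj => by
      rw [hIcc j]; exact (fix_prodpos M r hr 0 j ((Finset.mem_Icc.1 hj).2.trans hm.le)).le
    nlinarith
  have main : (1 + Ss) * (Pr * Ur) < (1 + Sr) * (Ps * Us) :=
    calc (1 + Ss) * (Pr * Ur) = ((1 + Ss) * Pr) * Ur := by ring
      _ ≤ ((1 + Sr) * Ps) * Ur := mul_le_mul_of_nonneg_right hA hUrpos.le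
      _ < ((1 + Sr) * Ps) * Us := (mul_lt_mul_iff_right₀ hposR).2 hU
      _ = (1 + Sr) * (Ps * Us) := by ring
  rw [hsplit r, hsplit s, htail r, htail s]
  nlinarith [main]

/-- Comparison of fixation probabilities: if `r i > s i > 0` for all
`1 ≤ i ≤ N-1`, then the fixation probability computed from the ratios `r`
is strictly larger than that computed from `s`, at every `1 ≤ i ≤ N-1`. -/
theorem fixation_comparison (N : ℕ) (hN : 2 ≤ N) (r s : ℕ → ℝ)
    (hs : ∀ i, 1 ≤ i → i ≤ N - 1 → 0 < s i)
    (hrs : ∀ i, 1 ≤ i → i ≤ N - 1 → s i < r i) :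
    ∀ i, 1 ≤ i → i ≤ N - 1 → piFix N s i < piFix N r i := by
  intro i hi1 hi2
  have hr : ∀ k, 1 ≤ k → k ≤ N - 1 → 0 < r k := fun k h1 h2 => (hs k h1 h2).trans (hrs k h1 h2)
  have hIcc : ∀ t : ℕ, Icc 1 t = Ioc 0 t := fun t => Finset.Icc_add_one_left_eq_Ioc 0 t
  have hdenpos : ∀ (f : ℕ → ℝ), (∀ k, 1 ≤ k → k ≤ N - 1 → 0 < f k) →
      0 < 1 + ∑ j ∈ Icc 1 (N - 1), ∏ k ∈ Icc 1 j, (f k)⁻¹ := by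
    intro f hf
    have : 0 ≤ ∑ j ∈ Icc 1 (N - 1), ∏ k ∈ Icc 1 j, (f k)⁻¹ :=
      Finset.sum_nonneg fun j hj => by
        rw [hIcc j]; exact (fix_prodpos (N - 1) f hf 0 j (Finset.mem_Icc.1 hj).2).le
    linarith
  have hm : i - 1 < N - 1 := Nat.lt_of_lt_of_le (Nat.sub_lt hi1 Nat.one_pos) hi2
  unfold piFix
  rw [div_lt_div_iff₀ (hdenpos s hs) (hdenpos r hr)]
  exact fix_key (N - 1) (i - 1) hm r s hs hrs
end

section
/- (Algebraic identity behind the comparison) For positive reals r_k, s_k (1 ≤ k ≤ N-1) and 1 ≤ i ≤ N-1, the expression (Σ_{j=i}^{N-1} Π_{k=1}^{j} s_k^{-1})(Σ_{j=1}^{i-1} Π_{k=1}^{j} r_k^{-1}) − (Σ_{j=i}^{N-1} Π_{k=1}^{j} r_k^{-1})(Σ_{j=1}^{i-1} Π_{k=1}^{j} s_k^{-1}) equals Σ_{j=1}^{i-1} (Π_{k=1}^{j} r_k^{-1} s_k^{-1}) · Σ_{ℓ=1}^{N-i} (Π_{m=j+1}^{N-ℓ} s_m^{-1} − Π_{m=j+1}^{N-ℓ}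 r_m^{-1}); in particular, if s_k^{-1} > r_k^{-1} > 0 for all k, this expression is nonnegative. -/
open Finset

private lemma prod_split_aux (x : ℕ → ℝ) {j j' : ℕ} (h : j ≤ j') :
    ∏ k ∈ Icc 1 j', x k = (∏ k ∈ Icc 1 j, x k) * ∏ m ∈ Icc (j + 1) j', x m := by
  have e1 : Icc 1 j' = Ioc 0 j' := Finset.Icc_add_one_left_eq_Ioc 0 _
  have e2 : Icc 1 j = Ioc 0 j := Finset.Icc_add_one_left_eq_Ioc 0 _
  have e3 : Icc (j + 1) j' = Ioc j j' := by rw [← Finset.Icc_add_one_left_eq_Ioc]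
  rw [e1, e2, e3, Finset.prod_Ioc_consecutive x (Nat.zero_le j) h]

/-- Algebraic identity behind the comparison of fixation probabilities, and
the resulting nonnegativity when `s_k⁻¹ > r_k⁻¹ > 0` for all `k`. -/
theorem comparison_identity (N : ℕ) (hN : 2 ≤ N) (r s : ℕ → ℝ)
    (hr : ∀ k, 1 ≤ k → k ≤ N - 1 → 0 < r k)
    (hs : ∀ k, 1 ≤ k → k ≤ N - 1 → 0 < s k)
    (i : ℕ) (hi1 : 1 ≤ i) (hi2 : i ≤ N - 1) :
    ((∑ j ∈ Finset.Icc i (N - 1), ∏ k ∈ Finset.Icc 1 j, (s k)⁻¹) *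
        (∑ j ∈ Finset.Icc 1 (i - 1), ∏ k ∈ Finset.Icc 1 j, (r k)⁻¹) -
      (∑ j ∈ Finset.Icc i (N - 1), ∏ k ∈ Finset.Icc 1 j, (r k)⁻¹) *
        (∑ j ∈ Finset.Icc 1 (i - 1), ∏ k ∈ Finset.Icc 1 j, (s k)⁻¹)
      = ∑ j ∈ Finset.Icc 1 (i - 1),
          (∏ k ∈ Finset.Icc 1 j, (r k)⁻¹ * (s k)⁻¹) *
            ∑ l ∈ Finset.Icc 1 (N - i),
              ((∏ m ∈ Finset.Icc (j + 1) (N - l), (s m)⁻¹) -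
                ∏ m ∈ Finset.Icc (j + 1) (N - l), (r m)⁻¹)) ∧
    ((∀ k, 1 ≤ k → k ≤ N - 1 → (r k)⁻¹ < (s k)⁻¹) →
      0 ≤ (∑ j ∈ Finset.Icc i (N - 1), ∏ k ∈ Finset.Icc 1 j, (s k)⁻¹) *
            (∑ j ∈ Finset.Icc 1 (i - 1), ∏ k ∈ Finset.Icc 1 j, (r k)⁻¹) -
          (∑ j ∈ Finset.Icc i (N - 1), ∏ k ∈ Finset.Icc 1 j, (r k)⁻¹) *
            (∑ j ∈ Finset.Icc 1 (i - 1), ∏ k ∈ Finset.Icc 1 j, (s k)⁻¹)) := by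
  have key : ∀ j ∈ Icc 1 (i - 1), ∀ j' ∈ Icc i (N - 1),
      (∏ k ∈ Icc 1 j', (s k)⁻¹) * (∏ k ∈ Icc 1 j, (r k)⁻¹) -
        (∏ k ∈ Icc 1 j', (r k)⁻¹) * (∏ k ∈ Icc 1 j, (s k)⁻¹)
      = (∏ k ∈ Icc 1 j, (r k)⁻¹ * (s k)⁻¹) *
          ((∏ m ∈ Icc (j + 1) j', (s m)⁻¹) - ∏ m ∈ Icc (j + 1) j', (r m)⁻¹) := by
    intro j hj j' hj'
    simp only [mem_Icc] at hj hj'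
    have hjj' : j ≤ j' := by omega
    rw [prod_split_aux (fun k => (s k)⁻¹) hjj', prod_split_aux (fun k => (r k)⁻¹) hjj',
      Finset.prod_mul_distrib]
    ring
  have main :
      ((∑ j ∈ Finset.Icc i (N - 1), ∏ k ∈ Finset.Icc 1 j, (s k)⁻¹) *
          (∑ j ∈ Finset.Icc 1 (i - 1), ∏ k ∈ Finset.Icc 1 j, (r k)⁻¹) -
        (∑ j ∈ Finset.Icc i (N - 1), ∏ k ∈ Finset.Icc 1 j, (r k)⁻¹) *
          (∑ j ∈ Finset.Icc 1 (i - 1), ∏ k ∈ Finset.Icc 1 j, (s k)⁻¹)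
        = ∑ j ∈ Finset.Icc 1 (i - 1),
            (∏ k ∈ Finset.Icc 1 j, (r k)⁻¹ * (s k)⁻¹) *
              ∑ l ∈ Finset.Icc 1 (N - i),
                ((∏ m ∈ Finset.Icc (j + 1) (N - l), (s m)⁻¹) -
                  ∏ m ∈ Finset.Icc (j + 1) (N - l), (r m)⁻¹)) := by
    rw [Finset.sum_mul_sum, Finset.sum_mul_sum, ← Finset.sum_sub_distrib]
    simp only [← Finset.sum_sub_distrib]
    rw [Finset.sum_comm]
    refine Finset.sum_congr rfl fun j hj => ?_
    rw [Finset.mul_sum]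
    have reindex : ∑ l ∈ Icc 1 (N - i),
        (∏ k ∈ Icc 1 j, (r k)⁻¹ * (s k)⁻¹) *
          ((∏ m ∈ Icc (j + 1) (N - l), (s m)⁻¹) - ∏ m ∈ Icc (j + 1) (N - l), (r m)⁻¹)
        = ∑ j' ∈ Icc i (N - 1),
            (∏ k ∈ Icc 1 j, (r k)⁻¹ * (s k)⁻¹) *
              ((∏ m ∈ Icc (j + 1) j', (s m)⁻¹) - ∏ m ∈ Icc (j + 1) j', (r m)⁻¹) := by
      refine Finset.sum_nbij' (fun l => N - l) (fun j' => N - j') ?_ ?_ ?_ ?_ ?_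
      · intro l hl; simp only [mem_Icc] at hl ⊢; omega
      · intro j' hj'; simp only [mem_Icc] at hj' ⊢; omega
      · intro l hl; simp only [mem_Icc] at hl; show N - (N - l) = l; omega
      · intro j' hj'; simp only [mem_Icc] at hj'; show N - (N - j') = j'; omega
      · intro l hl; rfl
    rw [reindex]
    exact Finset.sum_congr rfl fun j' hj' => key j hj j' hj'
  refine ⟨main, fun hlt => ?_⟩
  rw [main]
  refine Finset.sum_nonneg fun j hj => ?_
  simp only [mem_Icc] at hj
  refine mul_nonneg ?_ ?_
  · refine Finset.prod_nonneg fun k hk => ?_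
    simp only [mem_Icc] at hk
    have := hr k hk.1 (by omega)
    have := hs k hk.1 (by omega)
    positivity
  · refine Finset.sum_nonneg fun l hl => ?_
    simp only [mem_Icc] at hl
    rw [sub_nonneg]
    refine Finset.prod_le_prod (fun m hm => ?_) (fun m hm => ?_)
    · simp only [mem_Icc] at hm
      exact (inv_pos.mpr (hr m (by omega) (by omega))).le
    · simp only [mem_Icc] at hm
      exact (hlt m (by omega) (by omega)).le
end

section
/- Suppose for each large N we have a birth-death process on {0,...,N} with ratios r_i^{(N)}, and there exist s > 1 and x* ∈ (0,1) such that r_i^{(N)} > s whenever i > N x* and N is large enough. Then for every x ∈ (x*, 1), the fixation probability Π_N(x) = π^{(N)}_{[Nx]} converges to 1 as N → ∞. -/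
private lemma geom_tail_le' {q : ℝ} (h0 : 0 ≤ q) (h1 : q < 1) (n : ℕ) :
    ∑ t ∈ Finset.range n, q ^ t ≤ (1 - q)⁻¹ := by
  have hsum := summable_geometric_of_lt_one h0 h1
  calc ∑ t ∈ Finset.range n, q ^ t ≤ ∑' t : ℕ, q ^ t :=
        Summable.sum_le_tsum _ (fun i _ => pow_nonneg h0 i) hsum
    _ = (1 - q)⁻¹ := tsum_geometric_of_lt_one h0 h1

set_option maxHeartbeats 1000000 in
/-- If, for a family of birth-death processes on `{0,…,N}` with positive
ratios `r i N`, there are `s > 1` and `x* ∈ (0,1)` such that `r_i^{(N)} > s`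
whenever `i > N x*` and `N` is large enough, then for every `x ∈ (x*,1)` the
fixation probability `Π_N(x) = π^{(N)}_{[Nx]}` converges to 1 as `N → ∞`. -/
theorem fixation_tendsto_one (r : ℕ → ℕ → ℝ)
    (hpos : ∀ N i, 1 ≤ i → i ≤ N - 1 → 0 < r N i)
    (s xs : ℝ) (hs : 1 < s) (hxs0 : 0 < xs) (hxs1 : xs < 1)
    (N₀ : ℕ)
    (hr : ∀ N, N₀ ≤ N → ∀ i : ℕ, (N : ℝ) * xs < (i : ℝ) → i ≤ N - 1 → s < r N i)
    (x : ℝ) (hx : xs < x) (hx1 : x < 1) :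
    Filter.Tendsto (fun N : ℕ => piFix N (r N) ((round ((N : ℝ) * x)).toNat))
      Filter.atTop (nhds 1) := by
  classical
  have hs1 : (0:ℝ) < s - 1 := by linarith
  have hs0 : (0:ℝ) < s := by linarith
  have hδ : (0:ℝ) < x - xs := by linarith
  have hsinv0 : (0:ℝ) ≤ s⁻¹ := by positivity
  have hsinv1 : s⁻¹ < 1 := by
    rw [inv_lt_one_iff₀]; right; exact hs
  -- the lower bound function tends to 1
  have hKtop : Filter.Tendsto (fun N : ℕ => (s - 1) * ((N : ℝ) * (x - xs) - 5/2))
      Filter.atTop Filter.atTop := by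
    apply Filter.Tendsto.const_mul_atTop hs1
    have h0 : Filter.Tendsto (fun N : ℕ => (N : ℝ) * (x - xs)) Filter.atTop Filter.atTop :=
      Filter.Tendsto.atTop_mul_const hδ tendsto_natCast_atTop_atTop
    simpa [sub_eq_add_neg] using Filter.tendsto_atTop_add_const_right _ (-(5/2 : ℝ)) h0
  have hlow : Filter.Tendsto
      (fun N : ℕ => 1 - ((s - 1) * ((N : ℝ) * (x - xs) - 5/2))⁻¹)
      Filter.atTop (nhds 1) := by
    have h0 := hKtop.inv_tendsto_atTop
    have h1 := (tendsto_const_nhds (x := (1:ℝ)) (f := Filter.atTop (α := ℕ))).sub h0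
    simpa using h1
  have main : ∀ᶠ N : ℕ in Filter.atTop,
      1 - ((s - 1) * ((N : ℝ) * (x - xs) - 5/2))⁻¹
        ≤ piFix N (r N) ((round ((N : ℝ) * x)).toNat)
      ∧ piFix N (r N) ((round ((N : ℝ) * x)).toNat) ≤ 1 := by
    have e1 : ∀ᶠ N : ℕ in Filter.atTop, N₀ ≤ N := Filter.eventually_ge_atTop N₀
    have e2 : ∀ᶠ N : ℕ in Filter.atTop, (3/2 : ℝ) ≤ (N : ℝ) * (1 - x) :=
      (Filter.Tendsto.atTop_mul_const (by linarith) tendsto_natCast_atTop_atTop).eventually_ge_atTop _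
    have e3 : ∀ᶠ N : ℕ in Filter.atTop, (7/2 : ℝ) ≤ (N : ℝ) * (x - xs) :=
      (Filter.Tendsto.atTop_mul_const hδ tendsto_natCast_atTop_atTop).eventually_ge_atTop _
    filter_upwards [e1, e2, e3] with N h1 h2 h3
    set i : ℕ := (round ((N : ℝ) * x)).toNat with hidef
    set m : ℕ := (⌈(N : ℝ) * xs⌉).toNat + 1 with hmdef
    have hN0 : (0:ℝ) ≤ (N : ℝ) := Nat.cast_nonneg N
    have hNxs0 : (0:ℝ) ≤ (N : ℝ) * xs := by positivity
    have hNx : (7/2 : ℝ) ≤ (N : ℝ) * x := by nlinarith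
    -- bounds on i
    have hround := abs_le.1 (abs_sub_round ((N : ℝ) * x))
    have hrnn : (0 : ℤ) ≤ round ((N : ℝ) * x) := by
      by_contra hcon
      push_neg at hcon
      have hle : round ((N : ℝ) * x) + 1 ≤ 0 := Int.lt_iff_add_one_le.1 hcon
      have hle' : ((round ((N : ℝ) * x) : ℤ) : ℝ) + 1 ≤ 0 := by exact_mod_cast hle
      linarith [hround.2]
    have hicast : ((i : ℕ) : ℝ) = ((round ((N : ℝ) * x) : ℤ) : ℝ) := by
      rw [hidef]
      exact_mod_cast congrArg (Int.cast : ℤ → ℝ) (Int.toNat_of_nonneg hrnn)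
    have hi_lb : (N : ℝ) * x - 1/2 ≤ (i : ℝ) := by rw [hicast]; linarith [hround.2]
    have hi_ub : (i : ℝ) ≤ (N : ℝ) * x + 1/2 := by rw [hicast]; linarith [hround.1]
    -- bounds on m
    have hceilnn : (0 : ℤ) ≤ ⌈(N : ℝ) * xs⌉ := Int.ceil_nonneg hNxs0
    have hmcast : ((m : ℕ) : ℝ) = ((⌈(N : ℝ) * xs⌉ : ℤ) : ℝ) + 1 := by
      have h' : (((⌈(N : ℝ) * xs⌉).toNat : ℕ) : ℝ) = ((⌈(N : ℝ) * xs⌉ : ℤ) : ℝ) := by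
        exact_mod_cast congrArg (Int.cast : ℤ → ℝ) (Int.toNat_of_nonneg hceilnn)
      rw [hmdef, Nat.cast_add, Nat.cast_one, h']
    have hm_lb : (N : ℝ) * xs < (m : ℝ) := by
      rw [hmcast]; linarith [Int.le_ceil ((N : ℝ) * xs)]
    have hm_ub : (m : ℝ) ≤ (N : ℝ) * xs + 2 := by
      rw [hmcast]; linarith [Int.ceil_lt_add_one ((N : ℝ) * xs)]
    -- nat-order facts
    have hNge : 4 ≤ N := by
      have hN3 : (3:ℝ) < (N:ℝ) := by nlinarith
      have : 3 < N := by exact_mod_cast hN3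
      omega
    have hN1cast : ((N - 1 : ℕ) : ℝ) = (N : ℝ) - 1 := by
      rw [Nat.cast_sub (by omega)]; norm_num
    have hmi : m + 1 ≤ i := by
      have hc0 : ((m:ℕ):ℝ) + 1 ≤ (i:ℝ) := by nlinarith
      have hc : ((m + 1 : ℕ) : ℝ) ≤ (i:ℝ) := by rw [Nat.cast_add, Nat.cast_one]; exact hc0
      exact_mod_cast hc
    have hiN : i ≤ N - 1 := by
      have hc : (i:ℝ) ≤ ((N - 1 : ℕ):ℝ) := by rw [hN1cast]; nlinarith
      exact_mod_cast hc
    have hm1 : 1 ≤ m := by omega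
    have hi1 : 1 ≤ i := by omega
    set A : ℕ → ℝ := fun j => ∏ k ∈ Finset.Icc 1 j, (r N k)⁻¹ with hAdef
    have hApos : ∀ j, j ≤ N - 1 → 0 < A j := by
      intro j hj
      apply Finset.prod_pos
      intro k hk
      rw [Finset.mem_Icc] at hk
      exact inv_pos.2 (hpos N k hk.1 (le_trans hk.2 hj))
    have hrk : ∀ k, m ≤ k → k ≤ N - 1 → (r N k)⁻¹ ≤ s⁻¹ := by
      intro k hk1 hk2
      have hmk : ((m:ℕ):ℝ) ≤ (k:ℝ) := by exact_mod_cast hk1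
      have hks : s < r N k := hr N h1 k (lt_of_lt_of_le hm_lb hmk) hk2
      exact inv_anti₀ hs0 hks.le
    have hdecay : ∀ a b, m ≤ a → a ≤ b → b ≤ N - 1 → A b ≤ A a * s⁻¹ ^ (b - a) := by
      intro a b hma hab hbN
      have hsplit : A a * ∏ k ∈ Finset.Ioc a b, (r N k)⁻¹ = A b := by
        show (∏ k ∈ Finset.Icc 1 a, (r N k)⁻¹) * (∏ k ∈ Finset.Ioc a b, (r N k)⁻¹)
            = ∏ k ∈ Finset.Icc 1 b, (r N k)⁻¹
        rw [show Finset.Icc 1 a = Finset.Ioc 0 a from Finset.Icc_add_one_left_eq_Ioc 0 a,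
            show Finset.Icc 1 b = Finset.Ioc 0 b from Finset.Icc_add_one_left_eq_Ioc 0 b]
        exact Finset.prod_Ioc_consecutive _ (Nat.zero_le a) hab
      rw [← hsplit]
      have hb : ∏ k ∈ Finset.Ioc a b, (r N k)⁻¹ ≤ ∏ k ∈ Finset.Ioc a b, s⁻¹ := by
        apply Finset.prod_le_prod
        · intro k hk; rw [Finset.mem_Ioc] at hk
          exact inv_nonneg.2 (hpos N k (by omega) (le_trans hk.2 hbN)).le
        · intro k hk; rw [Finset.mem_Ioc] at hk
          exact hrk k (by omega) (le_trans hk.2 hbN)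
      rw [Finset.prod_const, Nat.card_Ioc] at hb
      exact mul_le_mul_of_nonneg_left hb (hApos a (le_trans hab hbN)).le
    have hAi1pos : 0 < A (i - 1) := hApos (i - 1) (by omega)
    -- tail bound
    have hgeomeq : s⁻¹ * (1 - s⁻¹)⁻¹ = (s - 1)⁻¹ := by
      have h1s : (1:ℝ) - s⁻¹ ≠ 0 := by
        have : (0:ℝ) < 1 - s⁻¹ := by linarith
        exact ne_of_gt this
      field_simp
    have hT : ∑ j ∈ Finset.Icc i (N-1), A j ≤ A (i-1) * (s-1)⁻¹ := by
      have step1 : ∑ j ∈ Finset.Icc i (N-1), A j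
          ≤ ∑ j ∈ Finset.Icc i (N-1), A (i-1) * s⁻¹ ^ (j - (i-1)) := by
        apply Finset.sum_le_sum
        intro j hj; rw [Finset.mem_Icc] at hj
        exact hdecay (i-1) j (by omega) (by omega) hj.2
      have step2 : ∑ j ∈ Finset.Icc i (N-1), A (i-1) * s⁻¹ ^ (j - (i-1))
          ≤ A (i-1) * (s-1)⁻¹ := by
        rw [← Finset.mul_sum]
        apply mul_le_mul_of_nonneg_left _ hAi1pos.le
        have hIccIco : Finset.Icc i (N-1) = Finset.Ico i N := by
          rw [← Finset.Ico_add_one_right_eq_Icc]; congr 1; omega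
        rw [hIccIco, Finset.sum_Ico_eq_sum_range]
        have hterm : ∀ t, s⁻¹ ^ ((i + t) - (i - 1)) = s⁻¹ * s⁻¹ ^ t := by
          intro t; rw [show (i + t) - (i - 1) = t + 1 by omega, pow_succ]; ring
        calc ∑ t ∈ Finset.range (N - i), s⁻¹ ^ ((i + t) - (i-1))
            = s⁻¹ * ∑ t ∈ Finset.range (N - i), s⁻¹ ^ t := by
              rw [Finset.mul_sum]; exact Finset.sum_congr rfl (fun t _ => hterm t)
          _ ≤ s⁻¹ * (1 - s⁻¹)⁻¹ :=
              mul_le_mul_of_nonneg_left (geom_tail_le' hsinv0 hsinv1 _) hsinv0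
          _ = (s - 1)⁻¹ := hgeomeq
      exact le_trans step1 step2
    -- middle bound
    have hMcard : (Finset.Icc m (i-1)).card = i - m := by rw [Nat.card_Icc]; omega
    have hM : ((i - m : ℕ) : ℝ) * A (i-1) ≤ ∑ j ∈ Finset.Icc m (i-1), A j := by
      calc ((i - m : ℕ) : ℝ) * A (i-1) = ∑ _j ∈ Finset.Icc m (i-1), A (i-1) := by
            rw [Finset.sum_const, hMcard, nsmul_eq_mul]
        _ ≤ ∑ j ∈ Finset.Icc m (i-1), A j := by
            apply Finset.sum_le_sum
            intro j hj; rw [Finset.mem_Icc] at hj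
            have hd := hdecay j (i-1) hj.1 hj.2 (by omega)
            have hp1 : s⁻¹ ^ ((i-1) - j) ≤ 1 := pow_le_one₀ hsinv0 hsinv1.le
            calc A (i-1) ≤ A j * s⁻¹ ^ ((i-1) - j) := hd
              _ ≤ A j := mul_le_of_le_one_right (hApos j (by omega)).le hp1
    set T := ∑ j ∈ Finset.Icc i (N-1), A j with hTdef
    set Su := ∑ j ∈ Finset.Icc 1 (i-1), A j with hSudef
    set Sd := ∑ j ∈ Finset.Icc 1 (N-1), A j with hSddef
    have hIccIoc : Finset.Icc i (N-1) = Finset.Ioc (i-1) (N-1) := by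
      have h := Finset.Icc_add_one_left_eq_Ioc (i-1) (N-1)
      rwa [show i-1+1 = i by omega] at h
    have hsplitsum : Su + T = Sd := by
      rw [hSudef, hTdef, hSddef,
          show Finset.Icc 1 (i-1) = Finset.Ioc 0 (i-1) from Finset.Icc_add_one_left_eq_Ioc 0 _,
          show Finset.Icc 1 (N-1) = Finset.Ioc 0 (N-1) from Finset.Icc_add_one_left_eq_Ioc 0 _, hIccIoc]
      exact Finset.sum_Ioc_consecutive _ (Nat.zero_le _) (by omega)
    have hTnn : 0 ≤ T := by
      rw [hTdef]
      exact Finset.sum_nonneg (fun j hj => (hApos j (Finset.mem_Icc.1 hj).2).le)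
    have hSubM : ((i - m : ℕ) : ℝ) * A (i-1) ≤ Sd := by
      refine le_trans hM ?_
      rw [hSddef]
      apply Finset.sum_le_sum_of_subset_of_nonneg
      · intro j hj
        rw [Finset.mem_Icc] at hj ⊢
        exact ⟨by omega, by omega⟩
      · intro j hj _
        exact (hApos j (Finset.mem_Icc.1 hj).2).le
    have hSdnn : 0 ≤ Sd := by
      rw [hSddef]
      exact Finset.sum_nonneg (fun j hj => (hApos j (Finset.mem_Icc.1 hj).2).le)
    have hD : (0:ℝ) < 1 + Sd := by linarith
    have him : 1 ≤ i - m := by omega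
    have himR : (1:ℝ) ≤ ((i - m : ℕ):ℝ) := by exact_mod_cast him
    have hdenpos : 0 < ((i - m : ℕ):ℝ) * A (i-1) := mul_pos (by linarith) hAi1pos
    have hratio : T / (1 + Sd) ≤ ((s-1) * ((i - m : ℕ):ℝ))⁻¹ := by
      have h1' : T / (1 + Sd) ≤ (A (i-1) * (s-1)⁻¹) / (((i - m : ℕ):ℝ) * A (i-1)) :=
        div_le_div₀ (by positivity) hT hdenpos (by linarith [hSubM])
      refine le_trans h1' (le_of_eq ?_)
      have hA' : A (i-1) ≠ 0 := ne_of_gt hAi1pos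
      have hs1' : s - 1 ≠ 0 := ne_of_gt hs1
      have him' : ((i - m : ℕ):ℝ) ≠ 0 := by linarith
      field_simp
    have himcast : ((i - m : ℕ):ℝ) = (i:ℝ) - (m:ℝ) := by
      rw [Nat.cast_sub (by omega : m ≤ i)]
    have hfinal_lb : (N:ℝ) * (x - xs) - 5/2 ≤ ((i - m : ℕ):ℝ) := by
      rw [himcast]; nlinarith
    have hKpos : 0 < (s-1) * ((N:ℝ) * (x - xs) - 5/2) := by nlinarith
    have hratio2 : T / (1 + Sd) ≤ ((s-1) * ((N:ℝ) * (x - xs) - 5/2))⁻¹ :=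
      le_trans hratio (inv_anti₀ hKpos (mul_le_mul_of_nonneg_left hfinal_lb hs1.le))
    have hpiFix : piFix N (r N) i = (1 + Su) / (1 + Sd) := by
      rw [piFix, hSudef, hSddef]
    have hkey : (1 + Su) / (1 + Sd) = 1 - T / (1 + Sd) := by
      rw [eq_sub_iff_add_eq, ← add_div,
        show 1 + Su + T = 1 + Sd by linarith [hsplitsum], div_self (ne_of_gt hD)]
    constructor
    · rw [hpiFix, hkey]
      linarith [hratio2]
    · rw [hpiFix, div_le_one hD]
      linarith [hsplitsum, hTnn]
  exact tendsto_of_tendsto_of_tendsto_of_le_of_le' hlow tendsto_const_nhds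
    (main.mono fun N h => h.1) (main.mono fun N h => h.2)
end
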